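/- Let D be a finite-dimensional central division algebra over a field F with dim_F D = p^4 (degree p²), p prime, and let v ∈ D be a nonzero element. If there exists an invertible t ∈ D and a central primitive p-th root of unity ρ such that v·t = ρ·t·v, and F[v] is not of dimension p over F, then the subfield F[v^p] satisfies [F[v^p] : F] = p. -/

import Mathlib

/-!
Conjugation by `t` sends `v` to `ρ • v`, so the minimal polynomial `m` of `v` is invariant under
scaling its roots by `ρ`. As `ρ` has order `p` and `m(0) ≠ 0`, only the coefficients of
`X ^ (p i)` survive, so `m` is the minimal polynomial of `v ^ p` evaluated at `X ^ p`, and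
`[F[v] : F] = p · [F[v ^ p] : F]`. Since `F[v]` is a division subalgebra, `[F[v] : F] = p ^ k`
divides `p ^ 4`, with `k ≠ 1` by hypothesis and `k ≠ 0` since `p ∣ [F[v] : F]`. If `k ≥ 3`,
the centralizer of `v ^ p` strictly contains `F[v]` (it contains `t`, which does not commute with
`v`), so its dimension exceeds `p ^ 3` and it is all of `D`. Then `v ^ p` is central, hence lies
in `F`, and `[F[v] : F] = p`, a contradiction. So `k = 2` and `[F[v ^ p] : F] = p`.
-/

open Polynomial Module

namespace Polynomial

variable {R : Type*} [CommSemiring R]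

theorem expand_contract_of_coeff_eq_zero {n : ℕ} (hn : n ≠ 0) {f : R[X]}
    (hf : ∀ i, ¬ n ∣ i → f.coeff i = 0) : expand R n (contract n f) = f := by
  ext i
  rw [coeff_expand (Nat.pos_of_ne_zero hn), coeff_contract hn]
  split_ifs with hi
  · rw [Nat.div_mul_cancel hi]
  · exact (hf i hi).symm

variable [IsDomain R]

theorem orderOf_dvd_of_scaleRoots_eq {f : R[X]} {r : R} (h : f.scaleRoots r = f) {i : ℕ}
    (hi : f.coeff i ≠ 0) : orderOf r ∣ f.natDegree - i := by
  have hcoeff := congrArg (coeff · i) h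
  simp only [coeff_scaleRoots] at hcoeff
  exact orderOf_dvd_of_pow_eq_one ((mul_right_eq_self₀.1 hcoeff).resolve_right hi)

theorem expand_contract_of_scaleRoots_eq {f : R[X]} {r : R} (h : f.scaleRoots r = f)
    (hr : orderOf r ≠ 0) (h0 : f.coeff 0 ≠ 0) :
    expand R (orderOf r) (contract (orderOf r) f) = f := by
  refine expand_contract_of_coeff_eq_zero hr fun i hi => ?_
  by_contra hfi
  have hdeg : orderOf r ∣ f.natDegree := by
    simpa using orderOf_dvd_of_scaleRoots_eq h h0
  have hle : i ≤ f.natDegree := le_natDegree_of_ne_zero hfi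
  refine hi ?_
  simpa [Nat.sub_sub_self hle] using Nat.dvd_sub hdeg (orderOf_dvd_of_scaleRoots_eq h hfi)

end Polynomial

section Ring

variable {F D : Type*} [Field F] [Ring D] [Algebra F D]

theorem Algebra.adjoin.finrank {x : D} (hx : IsIntegral F x) :
    finrank F (Algebra.adjoin F {x}) = (minpoly F x).natDegree := by
  have := Algebra.isMulCommutative_adjoin F (s := {x}) (by simp)
  let x' : Algebra.adjoin F {x} := ⟨x, Algebra.self_mem_adjoin_singleton F x⟩
  have hx' : IsIntegral F x' :=
    (isIntegral_algHom_iff (Algebra.adjoin F {x}).val Subtype.val_injective).1 hx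
  have htop : Algebra.adjoin F {x'} = ⊤ := by
    convert Algebra.adjoin_adjoin_coe_preimage (R := F) (s := {x})
    ext
    simp [x', Subtype.ext_iff]
  change _ = (minpoly F ((Algebra.adjoin F {x}).val x')).natDegree
  rw [minpoly.algHom_eq (Algebra.adjoin F {x}).val Subtype.val_injective x',
    (PowerBasis.ofAdjoinEqTop hx' htop).finrank]
  rfl

theorem minpoly_smul {x : D} (hx : IsIntegral F x) {c : F} (hc : c ≠ 0) :
    minpoly F (c • x) = (minpoly F x).scaleRoots c := by
  refine (minpoly.unique _ _ ((monic_scaleRoots_iff c).2 (minpoly.monic hx)) ?_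
    fun q hq hqx => ?_).symm
  · rw [Algebra.smul_def]
    exact scaleRoots_aeval_eq_zero (minpoly.aeval F x)
  · have hqx' : aeval x (q.scaleRoots c⁻¹) = 0 := by
      simpa [← Algebra.smul_def, smul_smul, inv_mul_cancel₀ hc, mul_inv_cancel₀ hc] using
        scaleRoots_aeval_eq_zero (r := c⁻¹) hqx
    rw [degree_scaleRoots, ← degree_scaleRoots q (s := c⁻¹)]
    exact minpoly.min F x ((monic_scaleRoots_iff _).2 hq) hqx'

theorem minpoly_units_conj (u : Dˣ) (x : D) : minpoly F (↑u * x * ↑u⁻¹) = minpoly F x := by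
  have := minpoly.algEquiv_eq (MulSemiringAction.toAlgEquiv F D (ConjAct.toConjAct u)) x
  rwa [MulSemiringAction.toAlgEquiv_apply, ConjAct.units_smul_def] at this

theorem minpoly_smul_eq_of_mul_eq_smul_mul {x t : D} (ht : IsUnit t) {ρ : F}
    (h : x * t = ρ • (t * x)) : minpoly F (ρ • x) = minpoly F x := by
  obtain ⟨u, rfl⟩ := ht
  have hconj : ρ • x = ↑u⁻¹ * x * ↑u⁻¹⁻¹ := by
    rw [inv_inv, mul_assoc, h, mul_smul_comm, ← mul_assoc, u.inv_mul, one_mul]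
  rw [hconj, minpoly_units_conj]

theorem pow_mul_eq_smul_mul_pow {x t : D} {ρ : F} (h : x * t = ρ • (t * x)) (n : ℕ) :
    x ^ n * t = ρ ^ n • (t * x ^ n) := by
  induction n with
  | zero => simp
  | succ n ih =>
    rw [pow_succ, mul_assoc, h, mul_smul_comm, ← mul_assoc, ih, smul_mul_assoc, smul_smul,
      mul_assoc, ← pow_succ']

theorem minpoly_pow_eq_of_minpoly_eq_expand {x : D} (hx : IsIntegral F x) {n : ℕ} (hn : 0 < n)
    {g : F[X]} (h : minpoly F x = expand F n g) : minpoly F (x ^ n) = g := by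
  have hg : g.Monic := (monic_expand_iff hn).1 (h ▸ minpoly.monic hx)
  refine (minpoly.unique _ _ hg ?_ fun q hq hqx => ?_).symm
  · rw [← expand_aeval, ← h, minpoly.aeval]
  · have hle := minpoly.min F x ((monic_expand_iff hn).2 hq) (by rwa [expand_aeval])
    rw [h, degree_eq_natDegree ((monic_expand_iff hn).2 hg).ne_zero,
      degree_eq_natDegree ((monic_expand_iff hn).2 hq).ne_zero, natDegree_expand,
      natDegree_expand, Nat.cast_le] at hle
    rw [degree_eq_natDegree hg.ne_zero, degree_eq_natDegree hq.ne_zero, Nat.cast_le]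
    exact Nat.le_of_mul_le_mul_right hle hn

variable [IsDomain D]

theorem minpoly_eq_expand_minpoly_pow_of_mul_eq_smul_mul {x t : D} {ρ : F} (hx : IsIntegral F x)
    (hx0 : x ≠ 0) (ht : IsUnit t) (h : x * t = ρ • (t * x)) (hρ : orderOf ρ ≠ 0) :
    minpoly F x = expand F (orderOf ρ) (minpoly F (x ^ orderOf ρ)) := by
  have hscale : (minpoly F x).scaleRoots ρ = minpoly F x := by
    rw [← minpoly_smul hx (by rintro rfl; exact hρ (orderOf_zero F)),
      minpoly_smul_eq_of_mul_eq_smul_mul ht h]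
  have hm := expand_contract_of_scaleRoots_eq hscale hρ (minpoly.coeff_zero_ne_zero hx hx0)
  rw [minpoly_pow_eq_of_minpoly_eq_expand hx (Nat.pos_of_ne_zero hρ) hm.symm, hm]

theorem adjoin_lt_centralizer_pow_of_mul_eq_smul_mul {x t : D} {ρ : F} (h : x * t = ρ • (t * x))
    {n : ℕ} (hρn : ρ ^ n = 1) (hρ : ρ ≠ 1) (hx : x ≠ 0) (ht : t ≠ 0) :
    Algebra.adjoin F {x} < Subalgebra.centralizer F {x ^ n} := by
  have ht_mem : t ∈ Subalgebra.centralizer F {x ^ n} := by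
    simp [Subalgebra.mem_centralizer_iff, pow_mul_eq_smul_mul_pow h, hρn]
  have ht_notMem : t ∉ Algebra.adjoin F {x} := fun hmem => by
    have hcomm : ρ • (t * x) = (1 : F) • (t * x) := by
      rw [← h, one_smul, (Algebra.commute_of_mem_adjoin_self hmem).eq]
    exact hρ (smul_left_injective F (mul_ne_zero ht hx) hcomm)
  refine SetLike.lt_iff_le_and_exists.2 ⟨Algebra.adjoin_le ?_, t, ht_mem, ht_notMem⟩
  simpa [Set.mem_centralizer_iff] using (Commute.self_pow x n).symm.eq

variable [FiniteDimensional F D]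

theorem Subalgebra.finrank_dvd_finrank (S : Subalgebra F D) : finrank F S ∣ finrank F D :=
  let := divisionRingOfFiniteDimensional F S
  ⟨_, (finrank_mul_finrank F S D).symm⟩

theorem Subalgebra.eq_top_of_lt_of_pow_le_finrank {p n : ℕ} (hp : p.Prime)
    (hD : finrank F D = p ^ (n + 1)) {S T : Subalgebra F D} (hST : S < T)
    (hS : p ^ n ≤ finrank F S) : T = ⊤ := by
  have hT : p ^ n < finrank F T := hS.trans_lt <|
    Submodule.finrank_lt_finrank_of_lt (Subalgebra.toSubmodule.lt_iff_lt.2 hST)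
  obtain ⟨k, hk, hTk⟩ := (Nat.dvd_prime_pow hp).1 (hD ▸ T.finrank_dvd_finrank)
  have hnk : n < k := (Nat.pow_lt_pow_iff_right hp.one_lt).1 (hTk ▸ hT)
  refine Algebra.toSubmodule_eq_top.1 (Submodule.eq_top_of_finrank_eq ?_)
  rw [T.finrank_toSubmodule, hTk, hD, show k = n + 1 by omega]

end Ring

theorem finrank_adjoin_pow_p {F : Type*} [Field F] {D : Type*} [DivisionRing D]
    [Algebra F D] (hcentral : Subring.center D = (algebraMap F D).range)
    (p : ℕ) (hp : p.Prime) (hdim : Module.finrank F D = p ^ 4)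
    (v : D) (hv : v ≠ 0)
    (h : ∃ (t : D) (ρ : F), IsUnit t ∧ ρ ^ p = 1 ∧ ρ ≠ 1 ∧ v * t = ρ • (t * v))
    (hFv : Module.finrank F (Algebra.adjoin F {v}) ≠ p) :
    Module.finrank F (Algebra.adjoin F {v ^ p}) = p := by
  obtain ⟨t, ρ, ht, hρp, hρ1, hvt⟩ := h
  have : Fact p.Prime := ⟨hp⟩
  have : FiniteDimensional F D := .of_finrank_pos (by rw [hdim]; exact pow_pos hp.pos 4)
  have hρ : orderOf ρ = p := orderOf_eq_prime hρp hρ1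
  have hdeg : finrank F (Algebra.adjoin F {v}) = finrank F (Algebra.adjoin F {v ^ p}) * p := by
    rw [Algebra.adjoin.finrank (.of_finite F v), Algebra.adjoin.finrank (.of_finite F _),
      minpoly_eq_expand_minpoly_pow_of_mul_eq_smul_mul (.of_finite F v) hv ht hvt
        (hρ ▸ hp.ne_zero), natDegree_expand, hρ]
  obtain ⟨k, -, hk⟩ :=
    (Nat.dvd_prime_pow hp).1 (hdim ▸ (Algebra.adjoin F {v}).finrank_dvd_finrank)
  have hk3 : k < 3 := by
    by_contra! hk3
    have htop : Subalgebra.centralizer F {v ^ p} = ⊤ :=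
      Subalgebra.eq_top_of_lt_of_pow_le_finrank (n := 3) hp hdim
        (adjoin_lt_centralizer_pow_of_mul_eq_smul_mul hvt hρp hρ1 hv ht.ne_zero)
        (hk ▸ Nat.pow_le_pow_right hp.pos hk3)
    have hcenter : v ^ p ∈ (algebraMap F D).range := by
      rw [← hcentral, ← Subalgebra.center_toSubring F]
      exact (Subalgebra.centralizer_eq_top_iff_subset F).1 htop rfl
    apply hFv
    rw [hdeg, Algebra.adjoin.finrank (.of_finite F _), minpoly.natDegree_eq_one_iff.2 hcenter,
      one_mul]
  interval_cases k
  · rw [pow_zero] at hk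
    exact absurd (Nat.dvd_one.1 (Dvd.intro_left _ (hdeg.symm.trans hk))) hp.one_lt.ne'
  · exact absurd (hk.trans (pow_one p)) hFv
  · exact Nat.eq_of_mul_eq_mul_right hp.pos (by rw [← hdeg, hk, sq])
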